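/- (Linear convergence of the subgradient method with geometrically decaying stepsize.) Suppose g is μ-sharp on 𝒳 with 𝒳* nonempty, fix L with 0 < μ ≤ L, set τ = μ/L, fix γ ∈ (0,1), and suppose τ ≤ √(1/(2 − γ)). Set λ = γμ²/(ρL) and q = √(1 − (1 − γ)τ²). Suppose every weak subgradient of g at every point of the tube 𝒯₁ has norm at most L. Let x : ℕ → ℝ^d and ζ : ℕ → ℝ^d be sequences with x₀ ∈ 𝒯_γ, such that for every k the vector ζ_k is a weak subgradient of g at x_k and x_{k+1} = proj_𝒳( x_k − λ·q^k·ζ_k/‖ζ_k‖ ), with the convention that x_{k+1} = x_k when ζ_k = 0. Then for every k ≥ 0, dist²(x_k, 𝒳*) ≤ (γμ/ρ)²·(1 − (1 − γ)τ²)^k. -/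

import Mathlib

/-!
Induct on `dist(x k, Xstar) ≤ (γμ/ρ) q^k`. Testing the weak subgradient inequality at points of
`Xstar`, and using that projecting onto `X` moves no farther from points of `X`, gives
`dist²(x⁺) ≤ (1 + sρ) dist² - 2s (g x - gstar) + s²‖ζ‖²` for the step `s = λ q^k / ‖ζ‖`.
Sharpness and `‖ζ‖ ≤ L` turn the right side into a convex quadratic in the normalized distance
`t ∈ [0, q^k]`, so only the endpoints need checking; at `t = 0` this is `τ² ≤ 1 - (1 - γ) τ²`,
i.e. `τ ≤ √(1/(2 - γ))`. A zero subgradient inside the tube forces `dist(x k, Xstar) = 0`.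
-/

open Metric
open scoped InnerProductSpace

theorem le_add_mul_infDist_sq {α : Type*} [PseudoMetricSpace α] {S : Set α} (hS : S.Nonempty)
    {x : α} {a A B : ℝ} (hB : 0 ≤ B) (h : ∀ z ∈ S, a ≤ A + B * dist x z ^ 2) :
    a ≤ A + B * infDist x S ^ 2 := by
  rcases hB.eq_or_lt with rfl | hB
  · obtain ⟨z, hz⟩ := hS
    simpa using h z hz
  by_contra! hlt
  have hinf : infDist x S < √((a - A) / B) := by
    rw [Real.lt_sqrt infDist_nonneg, lt_div_iff₀ hB]
    linarith
  obtain ⟨z, hz, hdist⟩ := (infDist_lt_iff hS).1 hinf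
  rw [Real.lt_sqrt dist_nonneg, lt_div_iff₀ hB] at hdist
  linarith [h z hz]

section WeakSubgradient

variable {E : Type*} [NormedAddCommGroup E] [InnerProductSpace ℝ E]

theorem Convex.dist_le_of_forall_dist_le {X : Set E} (hX : Convex ℝ X) {w p z : E} (hp : p ∈ X)
    (hnear : ∀ y ∈ X, dist w p ≤ dist w y) (hz : z ∈ X) : dist p z ≤ dist w z := by
  have hinf : ‖w - p‖ = ⨅ y : X, ‖w - y‖ := by
    have : Nonempty X := ⟨⟨p, hp⟩⟩
    refine le_antisymm (le_ciInf fun y => by simpa only [dist_eq_norm] using hnear y y.2) ?_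
    exact ciInf_le (f := fun y : X => ‖w - y‖) ⟨0, by rintro _ ⟨y, rfl⟩; exact norm_nonneg _⟩
      ⟨p, hp⟩
  have hobtuse := (norm_eq_iInf_iff_real_inner_le_zero hX hp).1 hinf z hz
  have hexpand : dist w z ^ 2 = dist w p ^ 2 - 2 * ⟪w - p, z - p⟫_ℝ + dist p z ^ 2 := by
    rw [dist_eq_norm, dist_eq_norm, dist_comm, dist_eq_norm, ← norm_sub_sq_real,
      sub_sub_sub_cancel_right]
  rw [← pow_le_pow_iff_left₀ dist_nonneg dist_nonneg two_ne_zero]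
  nlinarith [sq_nonneg (dist w p)]

def IsWeakSubgradient (ρ : ℝ) (g : E → ℝ) (x v : E) : Prop :=
  ∀ y, g x + ⟪v, y - x⟫_ℝ - ρ / 2 * ‖y - x‖ ^ 2 ≤ g y

variable {ρ gstar : ℝ} {g : E → ℝ} {x v : E} {S : Set E}

theorem IsWeakSubgradient.sub_le (hv : IsWeakSubgradient ρ g x v) {z : E} (hz : g z = gstar) :
    g x - gstar ≤ ⟪v, x - z⟫_ℝ + ρ / 2 * dist x z ^ 2 := by
  have h := hv z
  rw [← neg_sub x z, inner_neg_right, norm_neg, ← dist_eq_norm, hz] at h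
  linarith

theorem IsWeakSubgradient.infDist_sq_le_of_nearest (hv : IsWeakSubgradient ρ g x v)
    {X : Set E} (hX : Convex ℝ X) (hSX : S ⊆ X) (hS : S.Nonempty) (hgS : ∀ z ∈ S, g z = gstar)
    {s : ℝ} (hs : 0 ≤ s) (hρ : 0 ≤ ρ) {p : E} (hp : p ∈ X)
    (hnear : ∀ y ∈ X, dist (x - s • v) p ≤ dist (x - s • v) y) :
    infDist p S ^ 2 ≤
      (s ^ 2 * ‖v‖ ^ 2 - 2 * s * (g x - gstar)) + (1 + s * ρ) * infDist x S ^ 2 := by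
  refine le_add_mul_infDist_sq hS (by positivity) fun z hz => ?_
  have hpz : dist p z ≤ dist (x - s • v) z := hX.dist_le_of_forall_dist_le hp hnear (hSX hz)
  have hstep : dist (x - s • v) z ^ 2 = dist x z ^ 2 - 2 * s * ⟪v, x - z⟫_ℝ + s ^ 2 * ‖v‖ ^ 2 := by
    rw [dist_eq_norm, dist_eq_norm, sub_right_comm, norm_sub_sq_real, real_inner_smul_right,
      norm_smul, Real.norm_of_nonneg hs, real_inner_comm]
    ring
  have hdesc := mul_le_mul_of_nonneg_left (hv.sub_le (hgS z hz)) (by positivity : 0 ≤ 2 * s)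
  calc infDist p S ^ 2 ≤ dist p z ^ 2 :=
        pow_le_pow_left₀ infDist_nonneg (infDist_le_dist_of_mem hz) 2
    _ ≤ dist (x - s • v) z ^ 2 := pow_le_pow_left₀ dist_nonneg hpz 2
    _ ≤ _ := by rw [hstep]; linarith

theorem IsWeakSubgradient.infDist_eq_zero_of_sharp (hv : IsWeakSubgradient ρ g x 0) (hρ : 0 ≤ ρ)
    (hS : S.Nonempty) (hgS : ∀ z ∈ S, g z = gstar) {μ : ℝ}
    (hsharp : μ * infDist x S ≤ g x - gstar) (htube : ρ * infDist x S < 2 * μ) :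
    infDist x S = 0 := by
  have h : g x - gstar ≤ 0 + ρ / 2 * infDist x S ^ 2 :=
    le_add_mul_infDist_sq hS (by positivity) fun z hz => by simpa using hv.sub_le (hgS z hz)
  nlinarith [infDist_nonneg (x := x) (s := S)]

end WeakSubgradient

theorem sq_le_one_sub_mul_sq_of_le_sqrt {τ γ : ℝ} (hτ0 : 0 ≤ τ) (hγ : γ < 2)
    (hτ : τ ≤ √(1 / (2 - γ))) : τ ^ 2 ≤ 1 - (1 - γ) * τ ^ 2 := by
  rw [Real.le_sqrt hτ0 (by simp only [one_div, inv_nonneg]; linarith),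
    le_div_iff₀ (by linarith)] at hτ
  linarith

/-- `t` is the distance to the solution set in units of `γμ/ρ`, and `r = q^k`. -/
theorem normalized_step_le {τ γ r t : ℝ} (hγ : 0 ≤ γ) (hτ : τ ^ 2 ≤ 1 - (1 - γ) * τ ^ 2)
    (hr : r ≤ 1) (ht0 : 0 ≤ t) (htr : t ≤ r) :
    t ^ 2 + τ ^ 2 * r * (γ * t ^ 2 - 2 * t) + τ ^ 2 * r ^ 2 ≤ (1 - (1 - γ) * τ ^ 2) * r ^ 2 := by
  have hr0 : 0 ≤ r := ht0.trans htr
  have hslope : 1 + γ * τ ^ 2 * r - τ ^ 2 ≤ 1 - (1 - γ) * τ ^ 2 := by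
    nlinarith [mul_le_mul_of_nonneg_left hr (mul_nonneg hγ (sq_nonneg τ))]
  -- the quadratic in `t` is convex, hence below its chord over `[0, r]`
  have hchord : (1 + γ * τ ^ 2 * r) * t ^ 2 ≤ (1 + γ * τ ^ 2 * r) * (t * r) := by
    gcongr
    rw [sq]
    exact mul_le_mul_of_nonneg_left htr ht0
  calc t ^ 2 + τ ^ 2 * r * (γ * t ^ 2 - 2 * t) + τ ^ 2 * r ^ 2
      = (1 + γ * τ ^ 2 * r) * t ^ 2 - 2 * τ ^ 2 * r * t + τ ^ 2 * r ^ 2 := by ring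
    _ ≤ (1 + γ * τ ^ 2 * r) * (t * r) - 2 * τ ^ 2 * r * t + τ ^ 2 * r ^ 2 := by linarith
    _ = r * (t * (1 + γ * τ ^ 2 * r - τ ^ 2) + (r - t) * τ ^ 2) := by ring
    _ ≤ r * (t * (1 - (1 - γ) * τ ^ 2) + (r - t) * (1 - (1 - γ) * τ ^ 2)) := by
      gcongr
    _ = (1 - (1 - γ) * τ ^ 2) * r ^ 2 := by ring

theorem subgradient_step_le {μ ρ L γ r D G s n : ℝ} (hμ : 0 < μ) (hρ : 0 < ρ) (hL : 0 < L)
    (hγ0 : 0 < γ) (hγ1 : γ ≤ 1) (hτ : (μ / L) ^ 2 ≤ 1 - (1 - γ) * (μ / L) ^ 2) (hr : r ≤ 1)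
    (hD0 : 0 ≤ D) (hDr : D ≤ γ * μ / ρ * r) (hG : μ * D ≤ G)
    (hs : 0 ≤ s) (hnL : n ≤ L) (hsn : s * n = γ * μ ^ 2 / (ρ * L) * r) :
    (s ^ 2 * n ^ 2 - 2 * s * G) + (1 + s * ρ) * D ^ 2 ≤
      (γ * μ / ρ) ^ 2 * ((1 - (1 - γ) * (μ / L) ^ 2) * r ^ 2) := by
  set c := γ * μ / ρ
  have hneg : ρ * D ^ 2 - 2 * μ * D ≤ 0 := by
    have : ρ * D ≤ μ := calc
      ρ * D ≤ ρ * (c * r) := by gcongr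
      _ = μ * (γ * r) := by simp only [c]; field_simp
      _ ≤ μ := mul_le_of_le_one_right hμ.le (by nlinarith)
    nlinarith
  have hsL : γ * μ ^ 2 / (ρ * L) * r / L ≤ s := by
    rw [div_le_iff₀ hL, ← hsn]
    gcongr
  have ht : ρ * D / (γ * μ) ≤ r := by
    rw [div_le_iff₀ (by positivity)]
    calc ρ * D ≤ ρ * (c * r) := by gcongr
      _ = r * (γ * μ) := by simp only [c]; field_simp
  have hsq : s ^ 2 * n ^ 2 = (γ * μ ^ 2 / (ρ * L) * r) ^ 2 := by rw [← hsn]; ring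
  calc (s ^ 2 * n ^ 2 - 2 * s * G) + (1 + s * ρ) * D ^ 2
      ≤ D ^ 2 + s * (ρ * D ^ 2 - 2 * μ * D) + (γ * μ ^ 2 / (ρ * L) * r) ^ 2 := by
        nlinarith [mul_le_mul_of_nonneg_left hG hs]
    _ ≤ D ^ 2 + γ * μ ^ 2 / (ρ * L) * r / L * (ρ * D ^ 2 - 2 * μ * D)
          + (γ * μ ^ 2 / (ρ * L) * r) ^ 2 := by
        nlinarith [mul_le_mul_of_nonpos_right hsL hneg]
    _ = c ^ 2 * ((ρ * D / (γ * μ)) ^ 2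
          + (μ / L) ^ 2 * r * (γ * (ρ * D / (γ * μ)) ^ 2 - 2 * (ρ * D / (γ * μ)))
          + (μ / L) ^ 2 * r ^ 2) := by
        simp only [c]; field_simp
    _ ≤ c ^ 2 * ((1 - (1 - γ) * (μ / L) ^ 2) * r ^ 2) := by
        gcongr
        exact normalized_step_le hγ0.le hτ hr (by positivity) ht

theorem geometric_stepsize_linear_rate_general
    {d : ℕ}
    (g : EuclideanSpace ℝ (Fin d) → ℝ) (μ ρ L γ : ℝ)
    (hμ : 0 < μ) (hρ : 0 < ρ) (hμL : μ ≤ L) (hγ : γ ∈ Set.Ioo (0 : ℝ) 1)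
    (hτ : μ / L ≤ Real.sqrt (1 / (2 - γ)))
    (lam q : ℝ)
    (hlam : lam = γ * μ ^ 2 / (ρ * L))
    (hq : q = Real.sqrt (1 - (1 - γ) * (μ / L) ^ 2))
    (X Xstar : Set (EuclideanSpace ℝ (Fin d)))
    (hXcv : Convex ℝ X)
    (hXstar : Xstar = {x | x ∈ X ∧ ∀ y ∈ X, g x ≤ g y})
    (hXstarNe : Xstar.Nonempty)
    -- `gstar` is the minimal value of `g` over `X`
    (gstar : ℝ) (hgstar : ∀ z ∈ Xstar, g z = gstar)
    -- sharpness
    (hsharp : ∀ x ∈ X, μ * Metric.infDist x Xstar ≤ g x - gstar)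
    -- every weak subgradient at every point of the tube `𝒯₁` has norm at most `L`
    (hbound : ∀ x ∈ X, Metric.infDist x Xstar < μ / ρ →
      ∀ v : EuclideanSpace ℝ (Fin d),
        (∀ y, g x + ⟪v, y - x⟫_ℝ - ρ / 2 * ‖y - x‖ ^ 2 ≤ g y) → ‖v‖ ≤ L)
    -- the iterate and subgradient sequences
    (x ζ : ℕ → EuclideanSpace ℝ (Fin d))
    -- initialization in the tube `𝒯_γ`
    (hx0 : x 0 ∈ X) (hx0tube : Metric.infDist (x 0) Xstar < γ * μ / ρ)
    -- `ζ k` is a weak subgradient of `g` at `x k`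
    (hζ : ∀ k, ∀ y, g (x k) + ⟪ζ k, y - x k⟫_ℝ - ρ / 2 * ‖y - x k‖ ^ 2 ≤ g y)
    -- geometrically decaying stepsize update: projection of `x k - λ q^k ζ k/‖ζ k‖` onto `X`
    (hupdate : ∀ k, ζ k ≠ 0 →
      x (k + 1) ∈ X ∧
      ∀ y ∈ X, dist (x k - (lam * q ^ k / ‖ζ k‖) • ζ k) (x (k + 1)) ≤
        dist (x k - (lam * q ^ k / ‖ζ k‖) • ζ k) y)
    (hstop : ∀ k, ζ k = 0 → x (k + 1) = x k) :
    ∀ k : ℕ, Metric.infDist (x k) Xstar ^ 2 ≤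
      (γ * μ / ρ) ^ 2 * (1 - (1 - γ) * (μ / L) ^ 2) ^ k := by
  obtain ⟨hγ0, hγ1⟩ := hγ
  have hL : 0 < L := hμ.trans_le hμL
  have hτQ := sq_le_one_sub_mul_sq_of_le_sqrt (div_pos hμ hL).le (by linarith) hτ
  have hq0 : 0 ≤ q := hq ▸ Real.sqrt_nonneg _
  have hq1 : q ≤ 1 := hq ▸ Real.sqrt_le_one.2 (by nlinarith)
  have hq2 : q ^ 2 = 1 - (1 - γ) * (μ / L) ^ 2 := hq ▸ Real.sq_sqrt ((sq_nonneg _).trans hτQ)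
  have hlam0 : 0 ≤ lam := by rw [hlam]; positivity
  have hSX : Xstar ⊆ X := by rw [hXstar]; exact fun z hz => hz.1
  suffices h : ∀ k, x k ∈ X ∧ infDist (x k) Xstar ≤ γ * μ / ρ * q ^ k by
    intro k
    rw [← hq2, ← pow_mul, mul_comm 2 k, pow_mul, ← mul_pow]
    exact pow_le_pow_left₀ infDist_nonneg (h k).2 2
  intro k
  induction k with
  | zero => exact ⟨hx0, by simpa using hx0tube.le⟩
  | succ k ih =>
    obtain ⟨hxk, hD⟩ := ih
    have hqk : q ^ k ≤ 1 := pow_le_one₀ hq0 hq1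
    have htube : ρ * infDist (x k) Xstar < μ := by
      calc ρ * infDist (x k) Xstar ≤ ρ * (γ * μ / ρ * q ^ k) := by gcongr
        _ = γ * q ^ k * μ := by field_simp
        _ < μ := mul_lt_of_lt_one_left hμ (by nlinarith)
    by_cases hζk : ζ k = 0
    · have hζ0 : IsWeakSubgradient ρ g (x k) 0 := hζk ▸ hζ k
      rw [hstop k hζk, hζ0.infDist_eq_zero_of_sharp hρ.le hXstarNe hgstar (hsharp _ hxk)
        (by linarith)]
      exact ⟨hxk, by positivity⟩
    obtain ⟨hX1, hnear⟩ := hupdate k hζk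
    have hζL := hbound _ hxk ((lt_div_iff₀' hρ).2 htube) _ (hζ k)
    refine ⟨hX1, (pow_le_pow_iff_left₀ infDist_nonneg (by positivity) two_ne_zero).1 ?_⟩
    calc infDist (x (k + 1)) Xstar ^ 2
        ≤ _ := IsWeakSubgradient.infDist_sq_le_of_nearest (hζ k) hXcv hSX hXstarNe hgstar
          (by positivity) hρ.le hX1 hnear
      _ ≤ (γ * μ / ρ) ^ 2 * ((1 - (1 - γ) * (μ / L) ^ 2) * (q ^ k) ^ 2) :=
        subgradient_step_le hμ hρ hL hγ0 hγ1.le hτQ hqk infDist_nonneg hD (hsharp _ hxk)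
          (by positivity) hζL (by rw [div_mul_cancel₀ _ (norm_ne_zero_iff.2 hζk), hlam])
      _ = (γ * μ / ρ * q ^ (k + 1)) ^ 2 := by rw [← hq2]; ring

/-- **Linear convergence of the subgradient method with geometrically decaying stepsize.**
If `g` is `μ`-sharp on `X` with nonempty solution set `Xstar`, `0 < μ ≤ L`, `τ = μ/L`,
`γ ∈ (0,1)`, `τ ≤ √(1/(2-γ))`, `λ = γμ²/(ρL)`, `q = √(1 - (1-γ)τ²)`, weak subgradients on
the tube `𝒯₁` are bounded by `L` in norm, and the iterates follow the subgradient method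
with stepsize `λ·q^k` started in `𝒯_γ`, then
`dist²(x_k, Xstar) ≤ (γμ/ρ)²·(1 - (1-γ)τ²)^k` for all `k`. -/
theorem geometric_stepsize_linear_rate
    {d : ℕ} (hd : 1 ≤ d)
    (g : EuclideanSpace ℝ (Fin d) → ℝ) (μ ρ L γ : ℝ)
    (hμ : 0 < μ) (hρ : 0 < ρ) (hμL : μ ≤ L) (hγ : γ ∈ Set.Ioo (0 : ℝ) 1)
    (hτ : μ / L ≤ Real.sqrt (1 / (2 - γ)))
    (lam q : ℝ)
    (hlam : lam = γ * μ ^ 2 / (ρ * L))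
    (hq : q = Real.sqrt (1 - (1 - γ) * (μ / L) ^ 2))
    (X Xstar : Set (EuclideanSpace ℝ (Fin d)))
    (hXne : X.Nonempty) (hXcl : IsClosed X) (hXcv : Convex ℝ X)
    (hXstar : Xstar = {x | x ∈ X ∧ ∀ y ∈ X, g x ≤ g y})
    (hXstarNe : Xstar.Nonempty)
    -- `gstar` is the minimal value of `g` over `X`
    (gstar : ℝ) (hgstar : ∀ z ∈ Xstar, g z = gstar)
    -- sharpness
    (hsharp : ∀ x ∈ X, μ * Metric.infDist x Xstar ≤ g x - gstar)
    -- every weak subgradient at every point of the tube `𝒯₁` has norm at most `L`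
    (hbound : ∀ x ∈ X, Metric.infDist x Xstar < μ / ρ →
      ∀ v : EuclideanSpace ℝ (Fin d),
        (∀ y, g x + ⟪v, y - x⟫_ℝ - ρ / 2 * ‖y - x‖ ^ 2 ≤ g y) → ‖v‖ ≤ L)
    -- the iterate and subgradient sequences
    (x ζ : ℕ → EuclideanSpace ℝ (Fin d))
    -- initialization in the tube `𝒯_γ`
    (hx0 : x 0 ∈ X) (hx0tube : Metric.infDist (x 0) Xstar < γ * μ / ρ)
    -- `ζ k` is a weak subgradient of `g` at `x k`
    (hζ : ∀ k, ∀ y, g (x k) + ⟪ζ k, y - x k⟫_ℝ - ρ / 2 * ‖y - x k‖ ^ 2 ≤ g y)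
    -- geometrically decaying stepsize update: projection of `x k - λ q^k ζ k/‖ζ k‖` onto `X`
    (hupdate : ∀ k, ζ k ≠ 0 →
      x (k + 1) ∈ X ∧
      ∀ y ∈ X, dist (x k - (lam * q ^ k / ‖ζ k‖) • ζ k) (x (k + 1)) ≤
        dist (x k - (lam * q ^ k / ‖ζ k‖) • ζ k) y)
    (hstop : ∀ k, ζ k = 0 → x (k + 1) = x k) :
    ∀ k : ℕ, Metric.infDist (x k) Xstar ^ 2 ≤
      (γ * μ / ρ) ^ 2 * (1 - (1 - γ) * (μ / L) ^ 2) ^ k :=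
  geometric_stepsize_linear_rate_general g μ ρ L γ hμ hρ hμL hγ hτ lam q hlam hq X Xstar hXcv hXstar
    hXstarNe gstar hgstar hsharp hbound x ζ hx0 hx0tube hζ hupdate hstop
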